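/- Let S be a 0-left-cancellative semigroup with zero, let Λ ⊆ t̃S be a finite subset with Λ ∩ S ≠ ∅, and let u ∈ Λ. Then θ*_u(F*_Λ) consists precisely of the strings σ such that σ ∩ E_u ≠ ∅ and σ ∩ E_u ⊆ θ_u(F_Λ), where E_1 = S' by convention. -/
import Mathlib


namespace ExSt

variable {S : Type*} [SemigroupWithZero S]

/-- `s` divides `t`: `t = s` or `t = s * u` for some `u`. -/
def Divides (s t : S) : Prop := t = s ∨ ∃ u : S, t = s * u

/-- `r` is a least common multiple of `s` and `t`. -/
def IsLCM (s t r : S) : Prop :=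
  (Set.range (s * ·) ∩ Set.range (t * ·) = Set.range (r * ·)) ∧ Divides s r ∧ Divides t r

/-- `S` is 0-left-cancellative. -/
def LeftCancel0 (S : Type*) [SemigroupWithZero S] : Prop :=
  ∀ s t r : S, s * t = s * r → s * t ≠ 0 → t = r

/-- `S` admits least common multiples. -/
def AdmitsLCM (S : Type*) [SemigroupWithZero S] : Prop :=
  ∀ s t : S, ∃ r : S, IsLCM s t r

/-- A string in `S`. -/
def IsString (σ : Set S) : Prop :=
  σ.Nonempty ∧ (0 : S) ∉ σ ∧ (∀ s t : S, Divides s t → t ∈ σ → s ∈ σ) ∧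
    ∀ s₁ ∈ σ, ∀ s₂ ∈ σ, ∃ s ∈ σ, Divides s₁ s ∧ Divides s₂ s

/-- `F_s = {x | s * x ≠ 0}`. -/
def Fset (s : S) : Set S := {x | s * x ≠ 0}

/-- `E_s = sS \ {0}`. -/
def Eset (s : S) : Set S := {y | ∃ x : S, y = s * x ∧ s * x ≠ 0}

/-- `F_w` for `w` in the unitization `t̃S = S ∪ {1}` (modelled as `Option S`, `none = 1`). -/
def FsetW : Option S → Set S
  | none => {x | x ≠ 0}
  | some s => Fset s

/-- `E_w` for `w` in the unitization, with `E_1 = S'`. -/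
def EsetW : Option S → Set S
  | none => {x | x ≠ 0}
  | some s => Eset s

/-- `F_Λ = ⋂_{w ∈ Λ} F_w`. -/
def FsetLam (Λ : Finset (Option S)) : Set S := ⋂ w ∈ Λ, FsetW w

/-- Left multiplication by `u ∈ t̃S` (with `1 · x = x`). -/
def thetaApp : Option S → S → S
  | none, x => x
  | some u, x => u * x

/-- `θ_u(X)` for `u ∈ t̃S`. -/
def thetaImg (u : Option S) (X : Set S) : Set S := thetaApp u '' X

/-- The family `𝔈(S)` of constructible sets. -/
def Econs (S : Type*) [SemigroupWithZero S] : Set (Set S) :=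
  {X | ∃ Λ : Finset (Option S), (∃ s : S, some s ∈ Λ) ∧ ∃ u ∈ Λ, X = thetaImg u (FsetLam Λ)}

/-- `r*σ = {t | t ∥ r·s for some s ∈ σ}`. -/
def rstar (r : S) (σ : Set S) : Set S := {t | ∃ s ∈ σ, Divides t (r * s)}

/-- `r⁻¹*σ = {t | r·t ∈ σ}`. -/
def rinvstar (r : S) (σ : Set S) : Set S := {t | r * t ∈ σ}

/-- `F*_r`: strings `σ` with `r·s ≠ 0` for all `s ∈ σ`. -/
def Fstar (r : S) : Set (Set S) := {σ | IsString σ ∧ ∀ s ∈ σ, r * s ≠ 0}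

/-- `E*_r`: strings `σ` with `σ ∩ rS ≠ ∅`. -/
def Estar (r : S) : Set (Set S) := {σ | IsString σ ∧ (σ ∩ Set.range (r * ·)).Nonempty}

/-- `F*_w` for `w` in the unitization, with `F*_1` the set of all strings. -/
def FstarW : Option S → Set (Set S)
  | none => {σ | IsString σ}
  | some r => Fstar r

/-- `F*_Λ = ⋂_{w ∈ Λ} F*_w`. -/
def FstarLam (Λ : Finset (Option S)) : Set (Set S) := ⋂ w ∈ Λ, FstarW w

/-- The action of `u ∈ t̃S` on strings (with `1*σ = σ`). -/
def thetaStarApp : Option S → Set S → Set S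
  | none => id
  | some u => rstar u

/-- `θ*_u(Y)` for `u ∈ t̃S`. -/
def thetaStarImg (u : Option S) (Y : Set (Set S)) : Set (Set S) := thetaStarApp u '' Y

/-- A character of the semilattice `E` (values `False`/`True` playing the role of `0`/`1`). -/
def IsCharacter (E : Set (Set S)) (φ : Set S → Prop) : Prop :=
  ¬ φ ∅ ∧ (∃ X ∈ E, φ X) ∧ ∀ X ∈ E, ∀ Y ∈ E, (φ (X ∩ Y) ↔ φ X ∧ φ Y)

/-- An ultra-character: a character maximal for the pointwise order on `E`. -/
def IsUltraCharacter (E : Set (Set S)) (φ : Set S → Prop) : Prop :=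
  IsCharacter E φ ∧
    ∀ ψ : Set S → Prop, IsCharacter E ψ → (∀ X ∈ E, φ X → ψ X) → ∀ X ∈ E, ψ X → φ X

/-- The character `φ_σ` associated with a string `σ`. -/
def phiStr (σ : Set S) (X : Set S) : Prop :=
  ∃ Λ : Finset (Option S), (∃ s : S, some s ∈ Λ) ∧ ∃ u ∈ Λ,
    X = thetaImg u (FsetLam Λ) ∧ σ ∈ thetaStarImg u (FstarLam Λ)

/-- The set `σ_φ = {s | φ(E_s) = 1}` associated with a character `φ`. -/
def sigmaOf (φ : Set S → Prop) : Set S := {s | φ (Eset s)}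

/-- The interior of a string. -/
def strInterior (σ : Set S) : Set S := {s | ∃ x : S, s * x ∈ σ}

lemma divides_refl' (s : S) : Divides s s := Or.inl rfl

lemma divides_trans' {a b c : S} (h1 : Divides a b) (h2 : Divides b c) : Divides a c := by
  rcases h1 with rfl | ⟨u, rfl⟩
  · exact h2
  · rcases h2 with h | ⟨v, h⟩
    · exact Or.inr ⟨u, h⟩
    · exact Or.inr ⟨u * v, by rw [h, mul_assoc]⟩

lemma divides_mul' {r a b : S} (h : Divides a b) : Divides (r * a) (r * b) := by
  rcases h with rfl | ⟨u, rfl⟩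
  · exact Or.inl rfl
  · exact Or.inr ⟨u, (mul_assoc r a u).symm⟩

/-- `θ*_u(F*_Λ)` consists precisely of the strings `σ` with `∅ ≠ σ ∩ E_u ⊆ θ_u(F_Λ)`. -/
theorem thetaStarImg_characterization (hlc : LeftCancel0 S)
    (Λ : Finset (Option S)) (hΛ : ∃ s : S, some s ∈ Λ) (u : Option S) (hu : u ∈ Λ) :
    thetaStarImg u (FstarLam Λ) =
      {σ : Set S | IsString σ ∧ (σ ∩ EsetW u).Nonempty ∧
        σ ∩ EsetW u ⊆ thetaImg u (FsetLam Λ)} := by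
  cases u with
  | none =>
    ext σ
    simp only [thetaStarImg, thetaStarApp, Set.image_id, Set.mem_setOf_eq, EsetW,
      thetaImg, thetaApp]
    constructor
    · intro hσ
      have hσW : ∀ w ∈ Λ, σ ∈ FstarW w := by
        intro w hw
        simp only [FstarLam, Set.mem_iInter] at hσ
        exact hσ w hw
      obtain ⟨s₀, hs₀⟩ := hΛ
      have hstr := (hσW (some s₀) hs₀).1
      obtain ⟨⟨x, hx⟩, h0, -, -⟩ := id hstr
      refine ⟨hstr, ⟨x, hx, fun h => h0 (h ▸ hx)⟩, ?_⟩
      rintro t ⟨htσ, htne⟩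
      refine ⟨t, ?_, rfl⟩
      simp only [FsetLam, Set.mem_iInter]
      intro w hw
      cases w with
      | none => exact htne
      | some q => exact (hσW (some q) hw).2 t htσ
    · rintro ⟨hstr, _, hsub⟩
      obtain ⟨hne, h0, hcl, hdir⟩ := hstr
      simp only [FstarLam, Set.mem_iInter]
      intro w hw
      cases w with
      | none => exact ⟨hne, h0, hcl, hdir⟩
      | some q =>
        refine ⟨⟨hne, h0, hcl, hdir⟩, fun s hs => ?_⟩
        have hs' : s ∈ σ ∩ {x : S | x ≠ 0} := ⟨hs, fun h => h0 (h ▸ hs)⟩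
        obtain ⟨z, hz, hz2⟩ := hsub hs'
        have : z = s := hz2
        subst this
        simp only [FsetLam, Set.mem_iInter] at hz
        exact (hz (some q) hw : q * z ≠ 0)
  | some r =>
    ext σ
    simp only [thetaStarImg, thetaStarApp, Set.mem_image, Set.mem_setOf_eq, EsetW]
    constructor
    · rintro ⟨τ, hτ, rfl⟩
      have hτW : ∀ w ∈ Λ, τ ∈ FstarW w := by
        intro w hw
        simp only [FstarLam, Set.mem_iInter] at hτ
        exact hτ w hw
      obtain ⟨hstr, hFr⟩ := hτW (some r) hu
      obtain ⟨hne, h0, hcl, hdir⟩ := hstr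
      have hτsub : ∀ x ∈ τ, x ∈ FsetLam Λ := by
        intro x hx
        simp only [FsetLam, Set.mem_iInter]
        intro w hw
        cases w with
        | none => exact fun h => h0 (h ▸ hx)
        | some q => exact (hτW (some q) hw).2 x hx
      obtain ⟨s₀, hs₀⟩ := hne
      refine ⟨⟨?_, ?_, ?_, ?_⟩, ?_, ?_⟩
      · exact ⟨r * s₀, s₀, hs₀, divides_refl' _⟩
      · rintro ⟨s, hs, hd⟩
        rcases hd with h | ⟨v, h⟩
        · exact hFr s hs h
        · exact hFr s hs (by rw [h, zero_mul])
      · rintro a t hd ⟨s, hs, hd'⟩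
        exact ⟨s, hs, divides_trans' hd hd'⟩
      · rintro t₁ ⟨s₁, hs₁, hd₁⟩ t₂ ⟨s₂, hs₂, hd₂⟩
        obtain ⟨s, hs, h1, h2⟩ := hdir s₁ hs₁ s₂ hs₂
        exact ⟨r * s, ⟨s, hs, divides_refl' _⟩,
          divides_trans' hd₁ (divides_mul' h1), divides_trans' hd₂ (divides_mul' h2)⟩
      · exact ⟨r * s₀, ⟨s₀, hs₀, divides_refl' _⟩, s₀, rfl, hFr s₀ hs₀⟩
      · rintro t ⟨⟨s, hs, hd⟩, x, rfl, hxne⟩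
        rcases hd with h | ⟨v, h⟩
        · have hxs : s = x := hlc r s x h (hFr s hs)
          exact ⟨x, hτsub x (hxs ▸ hs), rfl⟩
        · have h' : r * s = r * (x * v) := by rw [h, mul_assoc]
          have hxs : s = x * v := hlc r s (x * v) h' (hFr s hs)
          have hxτ : x ∈ τ := hcl x s (Or.inr ⟨v, hxs⟩) hs
          exact ⟨x, hτsub x hxτ, rfl⟩
    · rintro ⟨⟨hne, h0, hcl, hdir⟩, ⟨t₀, ht₀σ, x₀, ht₀, ht₀ne⟩, hsub⟩
      set τ : Set S := {x | r * x ∈ σ} with hτdef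
      have hτF : ∀ x ∈ τ, x ∈ FsetLam Λ := by
        intro x hx
        have hrx : r * x ∈ σ := hx
        have hrxne : r * x ≠ 0 := fun h => h0 (h ▸ hrx)
        obtain ⟨z, hz, hz2⟩ := hsub ⟨hrx, x, rfl, hrxne⟩
        have hz2' : r * z = r * x := hz2
        have hzx : z = x := hlc r z x hz2' (by rw [hz2']; exact hrxne)
        exact hzx ▸ hz
      -- key: any a ∈ σ divisible by some r*x gives a = r*y with x ∥ y
      have key : ∀ (x : S) (a : S), Divides (r * x) a → ∃ y, a = r * y ∧ Divides x y := by
        intro x a hd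
        rcases hd with h | ⟨v, h⟩
        · exact ⟨x, h, divides_refl' x⟩
        · exact ⟨x * v, by rw [h, mul_assoc], Or.inr ⟨v, rfl⟩⟩
      have hτstr : IsString τ := by
        refine ⟨⟨x₀, show r * x₀ ∈ σ from ht₀ ▸ ht₀σ⟩, ?_, ?_, ?_⟩
        · intro h
          exact h0 (by simpa [hτdef, mul_zero] using h)
        · intro a x hd hx
          exact hcl (r * a) (r * x) (divides_mul' hd) hx
        · intro x₁ hx₁ x₂ hx₂
          obtain ⟨a, haσ, hd₁, hd₂⟩ := hdir (r * x₁) hx₁ (r * x₂) hx₂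
          obtain ⟨y₁, hy₁, hx₁y⟩ := key x₁ a hd₁
          obtain ⟨y₂, hy₂, hx₂y⟩ := key x₂ a hd₂
          have hane : a ≠ 0 := fun h => h0 (h ▸ haσ)
          have : y₁ = y₂ := hlc r y₁ y₂ (by rw [← hy₁, ← hy₂]) (by rw [← hy₁]; exact hane)
          refine ⟨y₁, show r * y₁ ∈ σ from hy₁ ▸ haσ, hx₁y, this ▸ hx₂y⟩
      refine ⟨τ, ?_, ?_⟩
      · simp only [FstarLam, Set.mem_iInter]
        intro w hw
        cases w with
        | none => exact hτstr
        | some q =>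
          refine ⟨hτstr, fun x hx => ?_⟩
          have := hτF x hx
          simp only [FsetLam, Set.mem_iInter] at this
          exact (this (some q) hw : q * x ≠ 0)
      · ext t
        constructor
        · rintro ⟨x, hx, hd⟩
          exact hcl t (r * x) hd hx
        · intro ht
          obtain ⟨a, haσ, hd₁, hd₂⟩ := hdir t ht t₀ ht₀σ
          obtain ⟨y, hy, _⟩ := key x₀ a (ht₀ ▸ hd₂)
          exact ⟨y, show r * y ∈ σ from hy ▸ haσ, hy ▸ hd₁⟩

end ExSt
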